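/- arXiv:1905.02948 — 4 statements merged into one kernel-verified Lean document; each statement's English description precedes it below -/
import Mathlib

section
/- For any 2N×2N real positive-definite matrix Γ with symplectic eigenvalues ν_1,…,ν_N (i.e., the ν_k > 0 such that the eigenvalues of iΩΓ are ±ν_k), the infimum of Tr(SΓSᵀ) over real symplectic matrices S equals 2Σ_{k=1}^N ν_k. -/
open Matrix

/-- The standard symplectic form `Ω = ⊕_{k=1}^N ω`, `ω = [[0,1],[−1,0]]`, on `ℝ^{2N}`. -/
def Omega (N : ℕ) : Matrix (Fin (2*N)) (Fin (2*N)) ℝ :=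
  Matrix.of fun i j =>
    if i.val % 2 = 0 ∧ j.val = i.val + 1 then 1
    else if j.val % 2 = 0 ∧ i.val = j.val + 1 then -1 else 0

/-- The Williamson normal form `⊕_{k=1}^N ν_k I₂`. -/
def williamsonDiag (N : ℕ) (ν : Fin N → ℝ) : Matrix (Fin (2*N)) (Fin (2*N)) ℝ :=
  Matrix.of fun i j => if i = j then ν ⟨i.val / 2, by omega⟩ else 0

private lemma range_two_mul_sum (f : ℕ → ℝ) (N : ℕ) :
    ∑ i ∈ Finset.range (2*N), f i = ∑ k ∈ Finset.range N, (f (2*k) + f (2*k+1)) := by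
  induction N with
  | zero => simp
  | succ n ih =>
    have h2 : 2*(n+1) = (2*n+1)+1 := by ring
    rw [h2, Finset.sum_range_succ, Finset.sum_range_succ, ih, Finset.sum_range_succ]
    ring

private lemma fin_sum_pair (N : ℕ) (g : Fin (2*N) → ℝ) :
    ∑ i, g i = ∑ k : Fin N, (g ⟨2*k.val, by omega⟩ + g ⟨2*k.val+1, by omega⟩) := by
  classical
  have e1 := Fin.sum_univ_eq_sum_range (fun n => if h : n < 2*N then g ⟨n,h⟩ else 0) (2*N)
  have e2 := Fin.sum_univ_eq_sum_range
    (fun n => if h : n < N then (g ⟨2*n, by omega⟩ + g ⟨2*n+1, by omega⟩) else 0) N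
  simp only [Fin.is_lt, dif_pos, Fin.eta] at e1 e2
  rw [e1, e2, range_two_mul_sum]
  refine Finset.sum_congr rfl ?_
  intro k hk
  rw [Finset.mem_range] at hk
  rw [dif_pos (by omega : 2*k < 2*N), dif_pos (by omega : 2*k+1 < 2*N), dif_pos hk]

private lemma Omega_sq (N : ℕ) : Omega N * Omega N = -1 := by
  ext i j
  rw [Matrix.mul_apply]
  have hiN := i.isLt
  by_cases hi : i.val % 2 = 0
  · have hlt : i.val + 1 < 2*N := by omega
    rw [Finset.sum_eq_single (⟨i.val+1, hlt⟩ : Fin (2*N))]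
    · simp only [Omega, of_apply, Matrix.neg_apply, one_apply, Fin.ext_iff, and_true, true_and]
      split_ifs <;> (try norm_num) <;> omega
    · intro b _ hb
      have hb' : b.val ≠ i.val + 1 := fun h => hb (Fin.ext h)
      simp only [Omega, of_apply, Fin.ext_iff, and_true, true_and]
      split_ifs <;> (try norm_num) <;> omega
    · simp
  · have hlt : i.val - 1 < 2*N := by omega
    rw [Finset.sum_eq_single (⟨i.val-1, hlt⟩ : Fin (2*N))]
    · simp only [Omega, of_apply, Matrix.neg_apply, one_apply, Fin.ext_iff, and_true, true_and]
      split_ifs <;> (try norm_num) <;> omega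
    · intro b _ hb
      have hb' : b.val ≠ i.val - 1 := fun h => hb (Fin.ext h)
      simp only [Omega, of_apply, Fin.ext_iff, and_true, true_and]
      split_ifs <;> (try norm_num) <;> omega
    · simp

private lemma Omega_transpose (N : ℕ) : (Omega N)ᵀ = -(Omega N) := by
  ext i j
  simp only [Omega, transpose_apply, Matrix.neg_apply, of_apply]
  split_ifs <;> (try norm_num) <;> omega

private lemma Omega_tmul (N : ℕ) : (Omega N)ᵀ * Omega N = 1 := by
  rw [Omega_transpose, neg_mul, Omega_sq]; simp

private lemma symplectic_transpose {N : ℕ} {T : Matrix (Fin (2*N)) (Fin (2*N)) ℝ}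
    (hT : T * Omega N * Tᵀ = Omega N) : Tᵀ * Omega N * T = Omega N := by
  have h1 : T * (Omega N * Tᵀ * -(Omega N)) = 1 := by
    calc T * (Omega N * Tᵀ * -(Omega N)) = (T * Omega N * Tᵀ) * -(Omega N) := by noncomm_ring
    _ = Omega N * -(Omega N) := by rw [hT]
    _ = 1 := by rw [mul_neg, Omega_sq]; simp
  have h2 : (Omega N * Tᵀ * -(Omega N)) * T = 1 := mul_eq_one_comm.mp h1
  have h3 : Omega N * (Tᵀ * -(Omega N) * T) = 1 := by rw [← h2]; noncomm_ring
  have h4 : -(Omega N) * (Omega N * (Tᵀ * -(Omega N) * T)) = -(Omega N) * 1 := by rw [h3]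
  have h5 : -(Omega N) * Omega N = 1 := by rw [neg_mul, Omega_sq]; simp
  rw [← mul_assoc, h5, one_mul, mul_one] at h4
  have := congrArg Neg.neg h4
  simp only [mul_neg, neg_mul, neg_neg] at this ⊢
  exact this

private lemma mulVec_dot (N : ℕ) (v : Fin (2*N) → ℝ) :
    (Omega N *ᵥ v) ⬝ᵥ (Omega N *ᵥ v) = v ⬝ᵥ v := by
  rw [dotProduct_mulVec, ← Matrix.mulVec_transpose, Matrix.mulVec_mulVec,
    Omega_tmul, Matrix.one_mulVec]

private lemma two_le_colpair {N : ℕ} {T : Matrix (Fin (2*N)) (Fin (2*N)) ℝ}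
    (hT : Tᵀ * Omega N * T = Omega N) (k : Fin N) :
    2 ≤ (∑ j, (T j ⟨2*k.val, by omega⟩)^2) + (∑ j, (T j ⟨2*k.val+1, by omega⟩)^2) := by
  set i : Fin (2*N) := ⟨2*k.val, by omega⟩ with hidef
  set i' : Fin (2*N) := ⟨2*k.val+1, by omega⟩ with hi'def
  set u : Fin (2*N) → ℝ := fun a => T a i with hu
  set v : Fin (2*N) → ℝ := fun b => T b i' with hv
  have hΩval : Omega N i i' = 1 := by
    simp only [Omega, of_apply, hidef, hi'def]
    rw [if_pos (⟨by omega, trivial⟩ : 2*k.val % 2 = 0 ∧ True)]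
  have hcon : u ⬝ᵥ (Omega N *ᵥ v) = 1 := by
    have h := congrFun (congrFun hT i) i'
    rw [hΩval] at h
    rw [← h, mul_assoc, Matrix.mul_apply]
    simp only [dotProduct, Matrix.mulVec, dotProduct, transpose_apply,
      Matrix.mul_apply, hu, hv]
  have hw2 : ∑ a, (Omega N *ᵥ v) a ^ 2 = ∑ b, v b ^ 2 := by
    have := mulVec_dot N v
    simpa [dotProduct, pow_two] using this
  have hcs := Finset.sum_mul_sq_le_sq_mul_sq Finset.univ u (Omega N *ᵥ v)
  rw [show ∑ a, u a * (Omega N *ᵥ v) a = 1 from hcon, hw2] at hcs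
  have hu0 : (0:ℝ) ≤ ∑ a, u a ^ 2 := Finset.sum_nonneg fun _ _ => sq_nonneg _
  have hv0 : (0:ℝ) ≤ ∑ b, v b ^ 2 := Finset.sum_nonneg fun _ _ => sq_nonneg _
  have : (1:ℝ) ≤ (∑ a, u a ^ 2) * ∑ b, v b ^ 2 := by simpa using hcs
  show (2:ℝ) ≤ (∑ j, u j ^ 2) + ∑ j, v j ^ 2
  nlinarith [this, hu0, hv0, sq_nonneg ((∑ j, u j ^ 2) - ∑ j, v j ^ 2)]

private lemma trace_lower {N : ℕ} {ν : Fin N → ℝ} (hν : ∀ k, 0 < ν k)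
    {T : Matrix (Fin (2*N)) (Fin (2*N)) ℝ} (hT : Tᵀ * Omega N * T = Omega N) :
    2 * ∑ k, ν k ≤ (T * williamsonDiag N ν * Tᵀ).trace := by
  have htr : (T * williamsonDiag N ν * Tᵀ).trace
      = ∑ a : Fin (2*N), ν ⟨a.val/2, by omega⟩ * ∑ j, (T j a)^2 := by
    rw [Matrix.trace]
    simp only [diag_apply, Matrix.mul_apply, transpose_apply, williamsonDiag, of_apply,
      mul_ite, mul_zero, Finset.sum_ite_eq']
    rw [Finset.sum_comm]
    refine Finset.sum_congr rfl fun a _ => ?_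
    rw [Finset.mul_sum]
    refine Finset.sum_congr rfl fun j _ => ?_
    simp only [Finset.mem_univ, if_true]
    ring
  rw [htr, fin_sum_pair N (fun a => ν ⟨a.val/2, by omega⟩ * ∑ j, (T j a)^2)]
  have hfix : ∀ k : Fin N, ∀ h, (⟨2*k.val/2, h⟩ : Fin N) = k :=
    fun k h => Fin.ext (by simp only [Fin.val_mk]; omega)
  have hfix2 : ∀ k : Fin N, ∀ h, (⟨(2*k.val+1)/2, h⟩ : Fin N) = k :=
    fun k h => Fin.ext (by simp only [Fin.val_mk]; omega)
  rw [Finset.mul_sum]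
  refine Finset.sum_le_sum fun k _ => ?_
  rw [hfix k (by omega), hfix2 k (by omega)]
  have h2 := two_le_colpair hT k
  have hp := hν k
  nlinarith [h2, hp]

private lemma trace_williamsonDiag (N : ℕ) (ν : Fin N → ℝ) :
    (williamsonDiag N ν).trace = 2 * ∑ k, ν k := by
  have : (williamsonDiag N ν).trace = ∑ a : Fin (2*N), ν ⟨a.val/2, by omega⟩ := by
    rw [Matrix.trace]
    refine Finset.sum_congr rfl fun a _ => ?_
    simp [williamsonDiag]
  rw [this, fin_sum_pair N (fun a => ν ⟨a.val/2, by omega⟩), Finset.mul_sum]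
  refine Finset.sum_congr rfl fun k _ => ?_
  have hfix : ∀ h, (⟨2*k.val/2, h⟩ : Fin N) = k :=
    fun h => Fin.ext (by simp only [Fin.val_mk]; omega)
  have hfix2 : ∀ h, (⟨(2*k.val+1)/2, h⟩ : Fin N) = k :=
    fun h => Fin.ext (by simp only [Fin.val_mk]; omega)
  rw [hfix (by omega), hfix2 (by omega)]
  ring

private lemma aux_cancel {n : Type*} [Fintype n] [DecidableEq n]
    {R S M : Matrix n n ℝ} (h : R * S = 1) : R * (S * M * Sᵀ) * Rᵀ = M := by
  calc R * (S * M * Sᵀ) * Rᵀ = (R * S) * M * (Sᵀ * Rᵀ) := by noncomm_ring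
  _ = (R * S) * M * (R * S)ᵀ := by rw [transpose_mul]
  _ = M := by rw [h]; simp

private lemma aux_assoc {n : Type*} [Fintype n] [DecidableEq n]
    (S R D : Matrix n n ℝ) : S * (R * D * Rᵀ) * Sᵀ = (S * R) * D * (S * R)ᵀ := by
  rw [transpose_mul]; noncomm_ring

/-- If `Γ` is positive-definite with symplectic eigenvalues
`ν_1, …, ν_N` (witnessed by a Williamson decomposition `S₀ Γ S₀ᵀ = ⊕_k ν_k I₂`
with `S₀` symplectic and `ν_k > 0`), then
`inf{Tr(SΓSᵀ) : S symplectic} = 2 ∑_k ν_k`. -/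
theorem str_eq_two_sum_symplectic_eigenvalues
    (N : ℕ) (Γ : Matrix (Fin (2*N)) (Fin (2*N)) ℝ) (hΓ : Γ.PosDef)
    (ν : Fin N → ℝ) (hν : ∀ k, 0 < ν k)
    (hWilliamson : ∃ S₀ : Matrix (Fin (2*N)) (Fin (2*N)) ℝ,
      S₀ * Omega N * S₀ᵀ = Omega N ∧ S₀ * Γ * S₀ᵀ = williamsonDiag N ν) :
    sInf {x : ℝ | ∃ S : Matrix (Fin (2*N)) (Fin (2*N)) ℝ,
        S * Omega N * Sᵀ = Omega N ∧ x = (S * Γ * Sᵀ).trace}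
      = 2 * ∑ k, ν k := by
  obtain ⟨S₀, hS₀Ω, hS₀Γ⟩ := hWilliamson
  have hR1 : S₀ * (Omega N * S₀ᵀ * -(Omega N)) = 1 := by
    calc S₀ * (Omega N * S₀ᵀ * -(Omega N)) = (S₀ * Omega N * S₀ᵀ) * -(Omega N) := by noncomm_ring
    _ = Omega N * -(Omega N) := by rw [hS₀Ω]
    _ = 1 := by rw [mul_neg, Omega_sq]; simp
  have hR2 : (Omega N * S₀ᵀ * -(Omega N)) * S₀ = 1 := mul_eq_one_comm.mp hR1
  have hΓeq : (Omega N * S₀ᵀ * -(Omega N)) * williamsonDiag N ν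
      * (Omega N * S₀ᵀ * -(Omega N))ᵀ = Γ := by
    have h := aux_cancel (M := Γ) hR2
    rw [hS₀Γ] at h
    exact h
  have hRΩ : (Omega N * S₀ᵀ * -(Omega N)) * Omega N * (Omega N * S₀ᵀ * -(Omega N))ᵀ
      = Omega N := by
    have h := aux_cancel (M := Omega N) hR2
    rw [hS₀Ω] at h
    exact h
  have hmem : (2 * ∑ k, ν k) ∈ {x : ℝ | ∃ S : Matrix (Fin (2*N)) (Fin (2*N)) ℝ,
      S * Omega N * Sᵀ = Omega N ∧ x = (S * Γ * Sᵀ).trace} :=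
    ⟨S₀, hS₀Ω, by rw [hS₀Γ, trace_williamsonDiag]⟩
  have hlb : ∀ x ∈ {x : ℝ | ∃ S : Matrix (Fin (2*N)) (Fin (2*N)) ℝ,
      S * Omega N * Sᵀ = Omega N ∧ x = (S * Γ * Sᵀ).trace}, 2 * ∑ k, ν k ≤ x := by
    rintro x ⟨S, hSΩ, rfl⟩
    have heq : S * Γ * Sᵀ = (S * (Omega N * S₀ᵀ * -(Omega N))) * williamsonDiag N ν
        * (S * (Omega N * S₀ᵀ * -(Omega N)))ᵀ := by
      rw [← hΓeq]
      exact aux_assoc _ _ _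
    have hSR : (S * (Omega N * S₀ᵀ * -(Omega N))) * Omega N
        * (S * (Omega N * S₀ᵀ * -(Omega N)))ᵀ = Omega N := by
      rw [← aux_assoc, hRΩ, hSΩ]
    rw [heq]
    exact trace_lower hν (symplectic_transpose hSR)
  exact le_antisymm (csInf_le ⟨2 * ∑ k, ν k, fun x hx => hlb x hx⟩ hmem)
    (le_csInf ⟨_, hmem⟩ hlb)
end

section
/- The symplectic trace is superadditive: for any two 2N×2N real positive-definite matrices C and D, Str(C + D) ≥ Str(C) + Str(D), where Str(Γ) = inf{Tr(SΓSᵀ) : S symplectic}. -/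
/-!
`Str J Γ` is the infimum over the symplectic group of `S ↦ Tr(S Γ Sᵀ)`, which is additive in `Γ`;
an infimum of a sum of functions dominates the sum of their infima, as soon as the infima exist,
which positive semidefiniteness guarantees since it keeps every `Tr(S Γ Sᵀ)` nonnegative.
-/

open Matrix

/-- Symplectic trace: `Str(Γ) = inf{Tr(SΓSᵀ) : SΩSᵀ = Ω}`. -/
noncomputable def Str {ι : Type*} [Fintype ι] (J Γ : Matrix ι ι ℝ) : ℝ :=
  sInf {x : ℝ | ∃ S : Matrix ι ι ℝ, S * J * Sᵀ = J ∧ x = (S * Γ * Sᵀ).trace}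

section Str

variable {ι : Type*} [Fintype ι] {J Γ Γ' : Matrix ι ι ℝ}

lemma trace_mul_mul_transpose_nonneg (hΓ : Γ.PosSemidef) (S : Matrix ι ι ℝ) :
    0 ≤ (S * Γ * Sᵀ).trace := by
  simpa only [conjTranspose_eq_transpose_of_trivial] using
    (hΓ.mul_mul_conjTranspose_same S).trace_nonneg

lemma str_le_trace (hΓ : Γ.PosSemidef) {S : Matrix ι ι ℝ} (hS : S * J * Sᵀ = J) :
    Str J Γ ≤ (S * Γ * Sᵀ).trace :=
  csInf_le ⟨0, by rintro _ ⟨T, -, rfl⟩; exact trace_mul_mul_transpose_nonneg hΓ T⟩ ⟨S, hS, rfl⟩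

lemma str_add_str_le_str_add [DecidableEq ι] (hΓ : Γ.PosSemidef) (hΓ' : Γ'.PosSemidef) :
    Str J Γ + Str J Γ' ≤ Str J (Γ + Γ') := by
  refine le_csInf ⟨_, 1, by simp, rfl⟩ ?_
  rintro _ ⟨S, hS, rfl⟩
  calc Str J Γ + Str J Γ' ≤ (S * Γ * Sᵀ).trace + (S * Γ' * Sᵀ).trace :=
        add_le_add (str_le_trace hΓ hS) (str_le_trace hΓ' hS)
    _ = (S * (Γ + Γ') * Sᵀ).trace := by rw [mul_add, add_mul, trace_add]

end Str

/-- The symplectic trace is superadditive: for positive-definite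
`C, D`, `Str(C + D) ≥ Str(C) + Str(D)`. -/
theorem str_superadditive (N : ℕ) (C D : Matrix (Fin (2*N)) (Fin (2*N)) ℝ)
    (hC : C.PosDef) (hD : D.PosDef) :
    Str (Omega N) C + Str (Omega N) D ≤ Str (Omega N) (C + D) :=
  str_add_str_le_str_add hC.posSemidef hD.posSemidef
end

section
/- The local Gaussian extractable work is superadditive under bipartition: if Γ is a 2N×2N positive-definite matrix written in block form Γ = [[Γ_A, Γ_{AB}],[Γ_{AB}ᵀ, Γ_B]] with Γ_A of size 2m×2m and Γ_B of size 2(N−m)×2(N−m), then W(Γ) ≥ W(Γ_A) + W(Γ_B), where W(X) = (1/2)(Tr X − Str X). -/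
open Matrix

/-- Local Gaussian extractable work `W(Γ) = (1/2)(Tr Γ − Str Γ)`. -/
noncomputable def extractableWork {ι : Type*} [Fintype ι] (J Γ : Matrix ι ι ℝ) : ℝ :=
  (1/2) * (Γ.trace - Str J Γ)

private lemma trace_nonneg_of_posSemidef {ι : Type*} [Fintype ι] [DecidableEq ι]
    {A : Matrix ι ι ℝ} (hA : A.PosSemidef) : 0 ≤ A.trace := by
  have h : ∀ i, 0 ≤ A i i := by
    intro i
    exact hA.diag_nonneg
  exact Finset.sum_nonneg fun i _ => h i

private lemma trace_fromBlocks' {α β : Type*} [Fintype α] [Fintype β]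
    (A : Matrix α α ℝ) (B : Matrix α β ℝ) (C : Matrix β α ℝ) (D : Matrix β β ℝ) :
    (Matrix.fromBlocks A B C D).trace = A.trace + D.trace := by
  simp [Matrix.trace, Fintype.sum_sum_type, Matrix.fromBlocks, Matrix.diag]

/-- superadditivity of the extractable work under bipartition:
for `Γ = [[Γ_A, Γ_{AB}],[Γ_{AB}ᵀ, Γ_B]]` positive-definite (w.r.t. the
direct-sum symplectic form `Ω_m ⊕ Ω_k`), `W(Γ) ≥ W(Γ_A) + W(Γ_B)`. -/
theorem extractableWork_superadditive_bipartition (m k : ℕ)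
    (ΓA : Matrix (Fin (2*m)) (Fin (2*m)) ℝ)
    (ΓB : Matrix (Fin (2*k)) (Fin (2*k)) ℝ)
    (ΓAB : Matrix (Fin (2*m)) (Fin (2*k)) ℝ)
    (hΓ : (Matrix.fromBlocks ΓA ΓAB ΓABᵀ ΓB).PosDef) :
    extractableWork (Omega m) ΓA + extractableWork (Omega k) ΓB
      ≤ extractableWork (Matrix.fromBlocks (Omega m) 0 0 (Omega k))
          (Matrix.fromBlocks ΓA ΓAB ΓABᵀ ΓB) := by
  set Γ := Matrix.fromBlocks ΓA ΓAB ΓABᵀ ΓB with hΓdef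
  set J := Matrix.fromBlocks (Omega m) 0 0 (Omega k) with hJdef
  set SA := {x : ℝ | ∃ S : Matrix (Fin (2*m)) (Fin (2*m)) ℝ,
    S * Omega m * Sᵀ = Omega m ∧ x = (S * ΓA * Sᵀ).trace}
  set SB := {x : ℝ | ∃ S : Matrix (Fin (2*k)) (Fin (2*k)) ℝ,
    S * Omega k * Sᵀ = Omega k ∧ x = (S * ΓB * Sᵀ).trace}
  have hSAne : SA.Nonempty := ⟨ΓA.trace, 1, by simp, by simp⟩
  have hSBne : SB.Nonempty := ⟨ΓB.trace, 1, by simp, by simp⟩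
  -- key: Str J Γ ≤ a + b for any a ∈ SA, b ∈ SB
  have key : ∀ a ∈ SA, ∀ b ∈ SB, Str J Γ ≤ a + b := by
    rintro a ⟨S₁, hS₁, rfl⟩ b ⟨S₂, hS₂, rfl⟩
    have hmem : (S₁ * ΓA * S₁ᵀ).trace + (S₂ * ΓB * S₂ᵀ).trace ∈
        {x : ℝ | ∃ S, S * J * Sᵀ = J ∧ x = (S * Γ * Sᵀ).trace} := by
      refine ⟨Matrix.fromBlocks S₁ 0 0 S₂, ?_, ?_⟩
      · simp [hJdef, Matrix.fromBlocks_transpose, Matrix.fromBlocks_multiply, hS₁, hS₂]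
      · rw [Matrix.fromBlocks_transpose, Matrix.fromBlocks_multiply,
          Matrix.fromBlocks_multiply, trace_fromBlocks']
        simp
    have hbdd : BddBelow {x : ℝ | ∃ S, S * J * Sᵀ = J ∧ x = (S * Γ * Sᵀ).trace} := by
      refine ⟨0, ?_⟩
      rintro x ⟨S, -, rfl⟩
      have : (S * Γ * Sᴴ).PosSemidef := hΓ.posSemidef.mul_mul_conjTranspose_same S
      simpa using trace_nonneg_of_posSemidef this
    exact csInf_le hbdd hmem
  have hStr : Str J Γ ≤ Str (Omega m) ΓA + Str (Omega k) ΓB := by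
    have h1 : ∀ b ∈ SB, Str J Γ - b ≤ sInf SA := by
      intro b hb
      exact le_csInf hSAne fun a ha => by linarith [key a ha b hb]
    have h2 : Str J Γ - sInf SA ≤ sInf SB :=
      le_csInf hSBne fun b hb => by linarith [h1 b hb]
    have e1 : Str (Omega m) ΓA = sInf SA := rfl
    have e2 : Str (Omega k) ΓB = sInf SB := rfl
    rw [e1, e2]; linarith
  have htr : Γ.trace = ΓA.trace + ΓB.trace := trace_fromBlocks' _ _ _ _
  simp only [extractableWork]
  rw [htr]
  have : Str J Γ ≤ Str (Omega m) ΓA + Str (Omega k) ΓB := hStr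
  linarith
end

section
/- W(Γ) = 0 if and only if Γ = O D Oᵀ for some orthogonal symplectic matrix O and some diagonal matrix D = ⊕_{k=1}^N ν_k I_2 with ν_k > 0; equivalently, W(Γ) = 0 iff the eigenvalues of Γ coincide (with multiplicity) with its symplectic eigenvalues, each counted twice. -/
open Matrix

namespace Will

variable {N : ℕ}

def ev (k : Fin N) : Fin (2*N) := ⟨2*k.1, by have := k.2; omega⟩
def od (k : Fin N) : Fin (2*N) := ⟨2*k.1+1, by have := k.2; omega⟩

lemma ev_ne_od (k l : Fin N) : ev k ≠ od l := by
  simp only [ev, od, ne_eq, Fin.mk.injEq]; omega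

lemma ev_inj {k l : Fin N} (h : ev k = ev l) : k = l := by
  simp only [ev, Fin.mk.injEq] at h; exact Fin.ext (by omega)

lemma od_inj {k l : Fin N} (h : od k = od l) : k = l := by
  simp only [od, Fin.mk.injEq] at h; exact Fin.ext (by omega)

lemma ev_eq_ev_iff (k l : Fin N) : ev k = ev l ↔ k = l :=
  ⟨ev_inj, fun h => h ▸ rfl⟩

lemma od_eq_od_iff (k l : Fin N) : od k = od l ↔ k = l :=
  ⟨od_inj, fun h => h ▸ rfl⟩

def pe (N : ℕ) : Fin N × Fin 2 ≃ Fin (2*N) where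
  toFun x := ⟨2*x.1.1 + x.2.1, by have := x.1.2; have := x.2.2; omega⟩
  invFun i := (⟨i.1/2, by have := i.2; omega⟩, ⟨i.1 % 2, by omega⟩)
  left_inv := by
    rintro ⟨⟨k,hk⟩,⟨r,hr⟩⟩
    simp only [Prod.mk.injEq, Fin.mk.injEq]
    constructor <;> omega
  right_inv := by
    rintro ⟨i,hi⟩
    simp only [Fin.mk.injEq]
    omega

lemma pe_zero (k : Fin N) : pe N (k, 0) = ev k := by
  apply Fin.ext; simp [pe, ev]

lemma pe_one (k : Fin N) : pe N (k, 1) = od k := by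
  apply Fin.ext; simp [pe, od]

lemma sum_split {M : Type*} [AddCommMonoid M] (f : Fin (2*N) → M) :
    ∑ i, f i = ∑ k : Fin N, (f (ev k) + f (od k)) := by
  rw [← Equiv.sum_comp (pe N) f, Fintype.sum_prod_type]
  refine Finset.sum_congr rfl fun k _ => ?_
  rw [Fin.sum_univ_two, pe_zero, pe_one]

lemma ev_or_od (i : Fin (2*N)) : (∃ k, i = ev k) ∨ (∃ k, i = od k) := by
  rcases Nat.even_or_odd i.1 with h | h
  · exact Or.inl ⟨⟨i.1/2, by have := i.2; omega⟩, by
      apply Fin.ext; simp only [ev]; rcases h with ⟨c, hc⟩; omega⟩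
  · exact Or.inr ⟨⟨i.1/2, by have := i.2; omega⟩, by
      apply Fin.ext; simp only [od]; rcases h with ⟨c, hc⟩; omega⟩

/-- Realification of a complex `N×N` matrix: each entry `a+bi` becomes the block
`[[a,b],[-b,a]]`. -/
def Rf (A : Matrix (Fin N) (Fin N) ℂ) : Matrix (Fin (2*N)) (Fin (2*N)) ℝ :=
  Matrix.of fun i j =>
    let z := A ⟨i.1/2, by have := i.2; omega⟩ ⟨j.1/2, by have := j.2; omega⟩
    if i.1 % 2 = 0 then (if j.1 % 2 = 0 then z.re else z.im)
    else (if j.1 % 2 = 0 then -z.im else z.re)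

lemma ev_half (k : Fin N) (h : (ev k).1 / 2 < N) : (⟨(ev k).1 / 2, h⟩ : Fin N) = k :=
  Fin.ext (show (2*k.1)/2 = k.1 by omega)

lemma od_half (k : Fin N) (h : (od k).1 / 2 < N) : (⟨(od k).1 / 2, h⟩ : Fin N) = k :=
  Fin.ext (show (2*k.1+1)/2 = k.1 by omega)

lemma ev_mod (k : Fin N) : (ev k).1 % 2 = 0 := by simp [ev]
lemma od_mod (k : Fin N) : (od k).1 % 2 = 1 := by simp [od, Nat.mul_add_mod]

lemma Rf_ev_ev (A : Matrix (Fin N) (Fin N) ℂ) (k l : Fin N) :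
    Rf A (ev k) (ev l) = (A k l).re := by
  simp [Rf, ev_mod, ev_half]

lemma Rf_ev_od (A : Matrix (Fin N) (Fin N) ℂ) (k l : Fin N) :
    Rf A (ev k) (od l) = (A k l).im := by
  simp [Rf, ev_mod, od_mod, ev_half, od_half]

lemma Rf_od_ev (A : Matrix (Fin N) (Fin N) ℂ) (k l : Fin N) :
    Rf A (od k) (ev l) = -(A k l).im := by
  simp [Rf, ev_mod, od_mod, ev_half, od_half]

lemma Rf_od_od (A : Matrix (Fin N) (Fin N) ℂ) (k l : Fin N) :
    Rf A (od k) (od l) = (A k l).re := by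
  simp [Rf, od_mod, od_half]


lemma Rf_one : Rf (1 : Matrix (Fin N) (Fin N) ℂ) = 1 := by
  ext i j
  obtain ⟨k, rfl⟩ | ⟨k, rfl⟩ := ev_or_od i <;> obtain ⟨l, rfl⟩ | ⟨l, rfl⟩ := ev_or_od j
  · rw [Rf_ev_ev]
    simp [Matrix.one_apply, ev_eq_ev_iff, apply_ite Complex.re]
  · rw [Rf_ev_od]
    simp [Matrix.one_apply, ev_ne_od k l, apply_ite Complex.im]
  · rw [Rf_od_ev]
    simp [Matrix.one_apply, Ne.symm (ev_ne_od l k), apply_ite Complex.im]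
  · rw [Rf_od_od]
    simp [Matrix.one_apply, od_eq_od_iff, apply_ite Complex.re]

lemma Rf_mul (A B : Matrix (Fin N) (Fin N) ℂ) : Rf (A * B) = Rf A * Rf B := by
  ext i j
  obtain ⟨k, rfl⟩ | ⟨k, rfl⟩ := ev_or_od i <;> obtain ⟨l, rfl⟩ | ⟨l, rfl⟩ := ev_or_od j <;>
    rw [Matrix.mul_apply, sum_split]
  · rw [Rf_ev_ev, Matrix.mul_apply, Complex.re_sum]
    refine Finset.sum_congr rfl fun p _ => ?_
    rw [Rf_ev_ev, Rf_ev_od, Rf_ev_ev, Rf_od_ev, Complex.mul_re]; ring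
  · rw [Rf_ev_od, Matrix.mul_apply, Complex.im_sum]
    refine Finset.sum_congr rfl fun p _ => ?_
    rw [Rf_ev_ev, Rf_ev_od, Rf_ev_od, Rf_od_od, Complex.mul_im]; try ring
  · rw [Rf_od_ev, Matrix.mul_apply, Complex.im_sum, ← Finset.sum_neg_distrib]
    refine Finset.sum_congr rfl fun p _ => ?_
    rw [Rf_od_ev, Rf_ev_ev, Rf_od_od, Rf_od_ev, Complex.mul_im]; ring
  · rw [Rf_od_od, Matrix.mul_apply, Complex.re_sum]
    refine Finset.sum_congr rfl fun p _ => ?_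
    rw [Rf_od_ev, Rf_ev_od, Rf_od_od, Rf_od_od, Complex.mul_re]; ring

lemma Rf_conjTranspose (A : Matrix (Fin N) (Fin N) ℂ) : Rf Aᴴ = (Rf A)ᵀ := by
  ext i j
  obtain ⟨k, rfl⟩ | ⟨k, rfl⟩ := ev_or_od i <;> obtain ⟨l, rfl⟩ | ⟨l, rfl⟩ := ev_or_od j <;>
    simp [Rf_ev_ev, Rf_ev_od, Rf_od_ev, Rf_od_od, Matrix.conjTranspose_apply]

lemma Rf_diagonal (ν : Fin N → ℝ) :
    Rf (Matrix.diagonal fun k => (ν k : ℂ)) = williamsonDiag N ν := by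
  ext i j
  obtain ⟨k, rfl⟩ | ⟨k, rfl⟩ := ev_or_od i <;> obtain ⟨l, rfl⟩ | ⟨l, rfl⟩ := ev_or_od j
  · rw [Rf_ev_ev]
    simp [Matrix.diagonal_apply, apply_ite Complex.re, williamsonDiag, ev_eq_ev_iff, ev_half]
  · rw [Rf_ev_od]
    simp [Matrix.diagonal_apply, apply_ite Complex.im, williamsonDiag, ev_ne_od k l]
  · rw [Rf_od_ev]
    simp [Matrix.diagonal_apply, apply_ite Complex.im, williamsonDiag, Ne.symm (ev_ne_od l k)]
  · rw [Rf_od_od]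
    simp [Matrix.diagonal_apply, apply_ite Complex.re, williamsonDiag, od_eq_od_iff, od_half]

lemma Rf_neg (A : Matrix (Fin N) (Fin N) ℂ) : Rf (-A) = -(Rf A) := by
  ext i j
  obtain ⟨k, rfl⟩ | ⟨k, rfl⟩ := ev_or_od i <;> obtain ⟨l, rfl⟩ | ⟨l, rfl⟩ := ev_or_od j <;>
    simp [Rf_ev_ev, Rf_ev_od, Rf_od_ev, Rf_od_od]

lemma Omega_eq_Rf : Omega N = Rf (Complex.I • (1 : Matrix (Fin N) (Fin N) ℂ)) := by
  ext i j
  obtain ⟨k, rfl⟩ | ⟨k, rfl⟩ := ev_or_od i <;> obtain ⟨l, rfl⟩ | ⟨l, rfl⟩ := ev_or_od j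
  · rw [Rf_ev_ev]
    have : ¬((ev k).1 % 2 = 0 ∧ (ev l).1 = (ev k).1 + 1) := by
      rintro ⟨-, h⟩; simp [ev] at h; omega
    simp only [Omega, of_apply, if_neg this, Matrix.smul_apply, Matrix.one_apply]
    by_cases h : k = l <;> simp [h, ev, ev_mod] <;> omega
  · rw [Rf_ev_od]
    by_cases h : k = l
    · subst h
      have : (ev k).1 % 2 = 0 ∧ (od k).1 = (ev k).1 + 1 := by simp [ev, od, ev_mod]
      simp [Omega, this, Matrix.one_apply]
    · have h1 : ¬((ev k).1 % 2 = 0 ∧ (od l).1 = (ev k).1 + 1) := by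
        rintro ⟨-, hh⟩; simp [ev, od] at hh
        exact h (Fin.ext (by omega))
      have h2 : ¬((od l).1 % 2 = 0 ∧ (ev k).1 = (od l).1 + 1) := by
        rintro ⟨hh, -⟩; rw [od_mod] at hh; omega
      simp [Omega, h1, h2, Matrix.one_apply, h]
  · rw [Rf_od_ev]
    by_cases h : k = l
    · subst h
      have h1 : ¬((od k).1 % 2 = 0 ∧ (ev k).1 = (od k).1 + 1) := by
        rintro ⟨hh, -⟩; rw [od_mod] at hh; omega
      have h2 : (ev k).1 % 2 = 0 ∧ (od k).1 = (ev k).1 + 1 := by simp [ev, od, ev_mod]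
      simp only [Omega, of_apply, if_neg h1]
      rw [if_pos h2]
      simp [Matrix.one_apply]
    · have h1 : ¬((od k).1 % 2 = 0 ∧ (ev l).1 = (od k).1 + 1) := by
        rintro ⟨hh, -⟩; rw [od_mod] at hh; omega
      have h2 : ¬((ev l).1 % 2 = 0 ∧ (od k).1 = (ev l).1 + 1) := by
        rintro ⟨-, hh⟩; simp [ev, od] at hh
        exact h (Fin.ext (by omega))
      simp [Omega, h1, h2, Matrix.one_apply, h]
  · rw [Rf_od_od]
    have h1 : ¬((od k).1 % 2 = 0 ∧ (od l).1 = (od k).1 + 1) := by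
      rintro ⟨hh, -⟩; rw [od_mod] at hh; omega
    have h2 : ¬((od l).1 % 2 = 0 ∧ (od k).1 = (od l).1 + 1) := by
      rintro ⟨hh, -⟩; rw [od_mod] at hh; omega
    simp only [Omega, of_apply, if_neg h1, if_neg h2, Matrix.smul_apply, Matrix.one_apply]
    by_cases h : k = l <;> simp [h]

lemma Omega_mul_Omega : Omega N * Omega N = -1 := by
  rw [Omega_eq_Rf, ← Rf_mul]
  have : (Complex.I • (1 : Matrix (Fin N) (Fin N) ℂ)) * (Complex.I • 1) = -1 := by
    simp [smul_smul, Complex.I_mul_I]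
  rw [this, show (-1 : Matrix (Fin N) (Fin N) ℂ) = -(1 : Matrix (Fin N) (Fin N) ℂ) from rfl,
    Rf_neg, Rf_one]

lemma transpose_Omega : (Omega N)ᵀ = -Omega N := by
  rw [Omega_eq_Rf, ← Rf_conjTranspose]
  have : (Complex.I • (1 : Matrix (Fin N) (Fin N) ℂ))ᴴ = -(Complex.I • 1) := by
    simp [Matrix.conjTranspose_smul, Complex.conj_I]
  rw [this, Rf_neg]

lemma neg_Omega_mul_Omega : (-Omega N) * Omega N = 1 := by
  rw [Matrix.neg_mul, Omega_mul_Omega, neg_neg]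

lemma Omega_mul_neg_Omega : Omega N * (-Omega N) = 1 := by
  rw [Matrix.mul_neg, Omega_mul_Omega, neg_neg]

lemma isUnit_Omega : IsUnit (Omega N) :=
  ⟨⟨Omega N, -Omega N, Omega_mul_neg_Omega, neg_Omega_mul_Omega⟩, rfl⟩

lemma Omega_inv : (Omega N)⁻¹ = -Omega N :=
  Matrix.inv_eq_right_inv Omega_mul_neg_Omega


lemma Omega_ev_ev (k l : Fin N) : Omega N (ev k) (ev l) = 0 := by
  rw [Omega_eq_Rf, Rf_ev_ev]
  simp [Matrix.one_apply, apply_ite Complex.re]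

lemma Omega_ev_od (k l : Fin N) : Omega N (ev k) (od l) = if k = l then 1 else 0 := by
  rw [Omega_eq_Rf, Rf_ev_od]
  simp [Matrix.one_apply, apply_ite Complex.im]

lemma Omega_od_ev (k l : Fin N) : Omega N (od k) (ev l) = if k = l then -1 else 0 := by
  rw [Omega_eq_Rf, Rf_od_ev]
  simp only [Matrix.smul_apply, Matrix.one_apply, apply_ite Complex.im, smul_eq_mul]
  split <;> simp

lemma Omega_od_od (k l : Fin N) : Omega N (od k) (od l) = 0 := by
  rw [Omega_eq_Rf, Rf_od_od]
  simp [Matrix.one_apply, apply_ite Complex.re]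

lemma omul_ev (M : Matrix (Fin (2*N)) (Fin (2*N)) ℝ) (k : Fin N) (j : Fin (2*N)) :
    (Omega N * M) (ev k) j = M (od k) j := by
  rw [Matrix.mul_apply, sum_split]
  simp [Omega_ev_ev, Omega_ev_od, ite_mul]

lemma omul_od (M : Matrix (Fin (2*N)) (Fin (2*N)) ℝ) (k : Fin N) (j : Fin (2*N)) :
    (Omega N * M) (od k) j = -(M (ev k) j) := by
  rw [Matrix.mul_apply, sum_split]
  simp [Omega_od_ev, Omega_od_od, ite_mul]

lemma mulo_ev (M : Matrix (Fin (2*N)) (Fin (2*N)) ℝ) (i : Fin (2*N)) (l : Fin N) :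
    (M * Omega N) i (ev l) = -(M i (od l)) := by
  rw [Matrix.mul_apply, sum_split]
  simp [Omega_ev_ev, Omega_od_ev, mul_ite]

lemma mulo_od (M : Matrix (Fin (2*N)) (Fin (2*N)) ℝ) (i : Fin (2*N)) (l : Fin N) :
    (M * Omega N) i (od l) = M i (ev l) := by
  rw [Matrix.mul_apply, sum_split]
  simp [Omega_ev_od, Omega_od_od, mul_ite]

lemma trace_split (M : Matrix (Fin (2*N)) (Fin (2*N)) ℝ) :
    M.trace = ∑ k : Fin N, (M (ev k) (ev k) + M (od k) (od k)) := by
  rw [Matrix.trace]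
  exact sum_split _

lemma wd_ev_ev (ν : Fin N → ℝ) (k l : Fin N) :
    williamsonDiag N ν (ev k) (ev l) = if k = l then ν k else 0 := by
  rw [← Rf_diagonal, Rf_ev_ev]
  simp [Matrix.diagonal_apply, apply_ite Complex.re]

lemma wd_ev_od (ν : Fin N → ℝ) (k l : Fin N) : williamsonDiag N ν (ev k) (od l) = 0 := by
  rw [← Rf_diagonal, Rf_ev_od]
  simp [Matrix.diagonal_apply, apply_ite Complex.im]

lemma wd_od_ev (ν : Fin N → ℝ) (k l : Fin N) : williamsonDiag N ν (od k) (ev l) = 0 := by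
  rw [← Rf_diagonal, Rf_od_ev]
  simp [Matrix.diagonal_apply, apply_ite Complex.im]

lemma wd_od_od (ν : Fin N → ℝ) (k l : Fin N) :
    williamsonDiag N ν (od k) (od l) = if k = l then ν k else 0 := by
  rw [← Rf_diagonal, Rf_od_od]
  simp [Matrix.diagonal_apply, apply_ite Complex.re]

lemma trace_wd (ν : Fin N → ℝ) : (williamsonDiag N ν).trace = ∑ k : Fin N, 2 * ν k := by
  rw [trace_split]
  refine Finset.sum_congr rfl fun k _ => ?_
  rw [wd_ev_ev, wd_od_od]
  simp; ring

lemma sympl_transpose {T : Matrix (Fin (2*N)) (Fin (2*N)) ℝ}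
    (hT : T * Omega N * Tᵀ = Omega N) : Tᵀ * Omega N * T = Omega N := by
  have h1 : T * (Omega N * Tᵀ * (-Omega N)) = 1 := by
    calc T * (Omega N * Tᵀ * (-Omega N)) = (T * Omega N * Tᵀ) * (-Omega N) := by
          simp only [mul_assoc]
      _ = Omega N * (-Omega N) := by rw [hT]
      _ = 1 := Omega_mul_neg_Omega
  have h2 : Omega N * Tᵀ * (-Omega N) * T = 1 := mul_eq_one_comm.mp h1
  have h3 : (-Omega N) * (Omega N * Tᵀ * (-Omega N) * T) = -Omega N := by rw [h2, mul_one]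
  have h4 : Tᵀ * (-Omega N) * T = -Omega N := by
    calc Tᵀ * (-Omega N) * T
        = (-Omega N) * Omega N * (Tᵀ * (-Omega N) * T) := by
          rw [neg_Omega_mul_Omega, one_mul]
      _ = (-Omega N) * (Omega N * Tᵀ * (-Omega N) * T) := by simp only [mul_assoc]
      _ = -Omega N := h3
  have h5 : -(Tᵀ * Omega N * T) = -Omega N := by
    rw [← h4]; simp [Matrix.mul_neg, Matrix.neg_mul]
  exact neg_inj.mp h5

lemma sympl_col_sum {T : Matrix (Fin (2*N)) (Fin (2*N)) ℝ}
    (hT : T * Omega N * Tᵀ = Omega N) (l : Fin N) :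
    ∑ k : Fin N, (T (ev k) (ev l) * T (od k) (od l) - T (od k) (ev l) * T (ev k) (od l)) = 1 := by
  have h := sympl_transpose hT
  have h2 : (Tᵀ * (Omega N * T)) (ev l) (od l) = 1 := by
    rw [← mul_assoc, h, Omega_ev_od, if_pos rfl]
  rw [Matrix.mul_apply, sum_split] at h2
  rw [← h2]
  refine Finset.sum_congr rfl fun k _ => ?_
  rw [Matrix.transpose_apply, Matrix.transpose_apply, omul_ev, omul_od]
  ring

lemma mulw_ev (ν : Fin N → ℝ) (M : Matrix (Fin (2*N)) (Fin (2*N)) ℝ) (i : Fin (2*N)) (l : Fin N) :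
    (M * williamsonDiag N ν) i (ev l) = M i (ev l) * ν l := by
  rw [Matrix.mul_apply, sum_split]
  simp [wd_ev_ev, wd_od_ev, mul_ite]

lemma mulw_od (ν : Fin N → ℝ) (M : Matrix (Fin (2*N)) (Fin (2*N)) ℝ) (i : Fin (2*N)) (l : Fin N) :
    (M * williamsonDiag N ν) i (od l) = M i (od l) * ν l := by
  rw [Matrix.mul_apply, sum_split]
  simp [wd_ev_od, wd_od_od, mul_ite]

lemma trace_TWT (ν : Fin N → ℝ) (T : Matrix (Fin (2*N)) (Fin (2*N)) ℝ) :
    (T * williamsonDiag N ν * Tᵀ).trace = ∑ l : Fin N, ν l * ∑ k : Fin N,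
      (T (ev k) (ev l) ^ 2 + T (ev k) (od l) ^ 2 + T (od k) (ev l) ^ 2 + T (od k) (od l) ^ 2) := by
  have key : ∀ i : Fin (2*N), (T * williamsonDiag N ν * Tᵀ) i i
      = ∑ l : Fin N, ν l * (T i (ev l) ^ 2 + T i (od l) ^ 2) := by
    intro i
    rw [Matrix.mul_apply, sum_split]
    refine Finset.sum_congr rfl fun l _ => ?_
    rw [Matrix.transpose_apply, Matrix.transpose_apply, mulw_ev, mulw_od]
    ring
  rw [trace_split]
  calc ∑ k : Fin N, ((T * williamsonDiag N ν * Tᵀ) (ev k) (ev k)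
          + (T * williamsonDiag N ν * Tᵀ) (od k) (od k))
      = ∑ k : Fin N, ∑ l : Fin N, ν l *
          (T (ev k) (ev l) ^ 2 + T (ev k) (od l) ^ 2 + T (od k) (ev l) ^ 2 + T (od k) (od l) ^ 2) := by
        refine Finset.sum_congr rfl fun k _ => ?_
        rw [key, key, ← Finset.sum_add_distrib]
        refine Finset.sum_congr rfl fun l _ => ?_
        ring
    _ = ∑ l : Fin N, ∑ k : Fin N, ν l *
          (T (ev k) (ev l) ^ 2 + T (ev k) (od l) ^ 2 + T (od k) (ev l) ^ 2 + T (od k) (od l) ^ 2) :=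
        Finset.sum_comm
    _ = _ := by
        refine Finset.sum_congr rfl fun l _ => ?_
        rw [Finset.mul_sum]

/-- The key inequality: conjugating the Williamson form by a symplectic matrix
cannot decrease the trace. -/
lemma trace_conj_wd_ge (ν : Fin N → ℝ) (hν : ∀ k, 0 ≤ ν k)
    {T : Matrix (Fin (2*N)) (Fin (2*N)) ℝ} (hT : T * Omega N * Tᵀ = Omega N) :
    (williamsonDiag N ν).trace ≤ (T * williamsonDiag N ν * Tᵀ).trace := by
  rw [trace_TWT, trace_wd]
  refine Finset.sum_le_sum fun l _ => ?_
  have hcol := sympl_col_sum hT l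
  have h2 : (2:ℝ) ≤ ∑ k : Fin N,
      (T (ev k) (ev l) ^ 2 + T (ev k) (od l) ^ 2 + T (od k) (ev l) ^ 2 + T (od k) (od l) ^ 2) := by
    calc (2:ℝ) = ∑ k : Fin N,
        2 * (T (ev k) (ev l) * T (od k) (od l) - T (od k) (ev l) * T (ev k) (od l)) := by
          rw [← Finset.mul_sum, hcol, mul_one]
      _ ≤ _ := by
          refine Finset.sum_le_sum fun k _ => ?_
          nlinarith [sq_nonneg (T (ev k) (ev l) - T (od k) (od l)),
            sq_nonneg (T (od k) (ev l) + T (ev k) (od l))]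
  calc 2 * ν l = ν l * 2 := mul_comm _ _
    _ ≤ _ := mul_le_mul_of_nonneg_left h2 (hν l)


lemma posSemidef_diag_nonneg {n : Type*} [Fintype n] [DecidableEq n] {M : Matrix n n ℝ}
    (hM : M.PosSemidef) (i : n) : 0 ≤ M i i := by
  have h := hM.dotProduct_mulVec_nonneg (Pi.single i 1)
  simpa [dotProduct, Matrix.mulVec, Pi.single_apply, ite_mul, mul_ite] using h

lemma posDef_diag_pos {n : Type*} [Fintype n] [DecidableEq n] {M : Matrix n n ℝ}
    (hM : M.PosDef) (i : n) : 0 < M i i := by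
  have h := hM.dotProduct_mulVec_pos (x := Pi.single i 1) (by
    intro hcontra
    have := congrFun hcontra i
    simp [Pi.single_apply] at this)
  simpa [dotProduct, Matrix.mulVec, Pi.single_apply, ite_mul, mul_ite] using h

lemma conj_trace_nonneg {Γ S : Matrix (Fin (2*N)) (Fin (2*N)) ℝ} (hΓ : Γ.PosDef) :
    0 ≤ (S * Γ * Sᵀ).trace := by
  have hps : (S * Γ * Sᴴ).PosSemidef := hΓ.posSemidef.mul_mul_conjTranspose_same S
  rw [Matrix.conjTranspose_eq_transpose_of_trivial] at hps
  rw [Matrix.trace]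
  exact Finset.sum_nonneg fun i _ => posSemidef_diag_nonneg hps i

lemma W_zero_iff {Γ : Matrix (Fin (2*N)) (Fin (2*N)) ℝ} (hΓ : Γ.PosDef) :
    extractableWork (Omega N) Γ = 0 ↔
      ∀ S : Matrix (Fin (2*N)) (Fin (2*N)) ℝ,
        S * Omega N * Sᵀ = Omega N → Γ.trace ≤ (S * Γ * Sᵀ).trace := by
  have hmem : Γ.trace ∈ {x : ℝ | ∃ S : Matrix (Fin (2*N)) (Fin (2*N)) ℝ,
      S * Omega N * Sᵀ = Omega N ∧ x = (S * Γ * Sᵀ).trace} :=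
    ⟨1, by simp, by simp⟩
  have hbdd : BddBelow {x : ℝ | ∃ S : Matrix (Fin (2*N)) (Fin (2*N)) ℝ,
      S * Omega N * Sᵀ = Omega N ∧ x = (S * Γ * Sᵀ).trace} := by
    refine ⟨0, ?_⟩
    rintro x ⟨S, hS, rfl⟩
    exact conj_trace_nonneg hΓ
  have hle : Str (Omega N) Γ ≤ Γ.trace := csInf_le hbdd hmem
  constructor
  · intro h0 S hS
    have heq : Str (Omega N) Γ = Γ.trace := by
      have : (1:ℝ)/2 * (Γ.trace - Str (Omega N) Γ) = 0 := h0
      have := mul_eq_zero.mp this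
      rcases this with h | h
      · norm_num at h
      · linarith [sub_eq_zero.mp h]
    have : Γ.trace ≤ (S * Γ * Sᵀ).trace := by
      rw [← heq]
      exact csInf_le hbdd ⟨S, hS, rfl⟩
    exact this
  · intro hmin
    have hge : Γ.trace ≤ Str (Omega N) Γ := by
      apply le_csInf ⟨_, hmem⟩
      rintro x ⟨S, hS, rfl⟩
      exact hmin S hS
    have : Str (Omega N) Γ = Γ.trace := le_antisymm hle hge
    simp [extractableWork, this]

attribute [local instance] Matrix.linftyOpNormedRing Matrix.linftyOpNormedAlgebra

open NormedSpace in
lemma commutes_of_min {Γ : Matrix (Fin (2*N)) (Fin (2*N)) ℝ} (hΓsym : Γᵀ = Γ)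
    (hmin : ∀ S : Matrix (Fin (2*N)) (Fin (2*N)) ℝ,
      S * Omega N * Sᵀ = Omega N → Γ.trace ≤ (S * Γ * Sᵀ).trace) :
    Γ * Omega N = Omega N * Γ := by
  classical
  set C : Matrix (Fin (2*N)) (Fin (2*N)) ℝ := Γ * Omega N - Omega N * Γ with hC
  set X : Matrix (Fin (2*N)) (Fin (2*N)) ℝ := Omega N * C with hXdef
  have hCt : Cᵀ = C := by
    rw [hC, Matrix.transpose_sub, Matrix.transpose_mul, Matrix.transpose_mul,
      transpose_Omega, hΓsym]
    simp only [Matrix.neg_mul, Matrix.mul_neg]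
    abel
  have hXt : Xᵀ = -(C * Omega N) := by
    rw [hXdef, Matrix.transpose_mul, transpose_Omega, hCt, Matrix.mul_neg]
  -- conjugation identity : Ω (t•Xᵀ) Ω⁻¹ = -(t•X)
  have hconj_arg : ∀ t : ℝ, Omega N * (t • Xᵀ) * (Omega N)⁻¹ = -(t • X) := by
    intro t
    rw [Omega_inv, hXt, hXdef]
    rw [Matrix.mul_smul, Matrix.smul_mul, ← smul_neg]
    congr 1
    calc Omega N * -(C * Omega N) * -Omega N
        = Omega N * C * (Omega N * Omega N) := by
          simp only [Matrix.mul_neg, Matrix.neg_mul, neg_neg, mul_assoc]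
      _ = -(Omega N * C) := by rw [Omega_mul_Omega, Matrix.mul_neg, mul_one]
  have hexpT : ∀ t : ℝ, (exp (t • X))ᵀ = exp (t • Xᵀ) := by
    intro t
    rw [← Matrix.transpose_smul, Matrix.exp_transpose]
  have hswap : ∀ t : ℝ, Omega N * exp (t • Xᵀ) = exp (-(t • X)) * Omega N := by
    intro t
    have hconj := Matrix.exp_conj (Omega N) (t • Xᵀ) isUnit_Omega
    rw [hconj_arg t] at hconj
    have := congrArg (fun M => M * Omega N) hconj
    rw [mul_assoc, mul_assoc, Omega_inv, neg_Omega_mul_Omega, mul_one] at this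
    exact this.symm
  have hsympl : ∀ t : ℝ, (exp (t • X)) * Omega N * (exp (t • X))ᵀ = Omega N := by
    intro t
    rw [hexpT t, mul_assoc, hswap t, ← mul_assoc]
    have hcomm : Commute (t • X) (-(t • X)) := (Commute.refl _).neg_right
    rw [← Matrix.exp_add_of_commute _ _ hcomm]
    simp [NormedSpace.exp_zero]
  -- the function and its minimality
  set f : ℝ → ℝ := fun t => (exp (t • X) * Γ * (exp (t • X))ᵀ).trace with hf
  have hf0 : f 0 = Γ.trace := by
    simp [hf, NormedSpace.exp_zero]
  have hmin' : ∀ t : ℝ, f 0 ≤ f t := by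
    intro t
    rw [hf0]
    exact hmin _ (hsympl t)
  -- the derivative at 0
  have hg : HasDerivAt (fun t : ℝ => exp (t • X)) X 0 := by
    have h := hasDerivAt_exp_smul_const (𝕂 := ℝ) X (0:ℝ)
    simp [NormedSpace.exp_zero] at h
    exact h
  have hgT : HasDerivAt (fun t : ℝ => exp (t • Xᵀ)) Xᵀ 0 := by
    have h := hasDerivAt_exp_smul_const (𝕂 := ℝ) Xᵀ (0:ℝ)
    simp [NormedSpace.exp_zero] at h
    exact h
  have hΓgT : HasDerivAt (fun t : ℝ => Γ * exp (t • Xᵀ)) (Γ * Xᵀ) 0 := hgT.const_mul Γ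
  have hprod : HasDerivAt (fun t : ℝ => exp (t • X) * (Γ * exp (t • Xᵀ)))
      (X * Γ + Γ * Xᵀ) 0 := by
    have h := hg.mul hΓgT
    simp [NormedSpace.exp_zero] at h
    exact h
  let L := LinearMap.toContinuousLinearMap
    (Matrix.traceLinearMap (Fin (2*N)) ℝ ℝ)
  have hfL : f = fun t => L (exp (t • X) * (Γ * exp (t • Xᵀ))) := by
    funext t
    simp [hf, hexpT t, mul_assoc, L, Matrix.traceLinearMap]
  have hfd : HasDerivAt f ((X * Γ + Γ * Xᵀ).trace) 0 := by
    rw [hfL]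
    have := L.hasFDerivAt.comp_hasDerivAt 0 hprod
    simp [L, Matrix.traceLinearMap, Function.comp_def] at this ⊢
    rw [← Matrix.trace_add]
    exact this
  have hloc : IsLocalMin f 0 := Filter.Eventually.of_forall hmin'
  have hzero : (X * Γ + Γ * Xᵀ).trace = 0 := hloc.hasDerivAt_eq_zero hfd
  -- translate into trace of C*C
  have e1 : (X * Γ + Γ * Xᵀ).trace = 2 * (X * Γ).trace := by
    rw [Matrix.trace_add]
    have : (Γ * Xᵀ).trace = (X * Γ).trace := by
      rw [← Matrix.trace_transpose (Γ * Xᵀ), Matrix.transpose_mul,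
        Matrix.transpose_transpose, hΓsym]
    rw [this]; ring
  have eX : (X * Γ).trace = (C * (Γ * Omega N)).trace := by
    rw [hXdef, mul_assoc, Matrix.trace_mul_comm, mul_assoc]
  have expandC : C * C = (Γ*Omega N)*(Γ*Omega N) - (Γ*Omega N)*(Omega N*Γ)
      - ((Omega N*Γ)*(Γ*Omega N) - (Omega N*Γ)*(Omega N*Γ)) := by
    rw [hC]; noncomm_ring
  have expandX : C * (Γ * Omega N)
      = (Γ*Omega N)*(Γ*Omega N) - (Omega N*Γ)*(Γ*Omega N) := by
    rw [hC]; noncomm_ring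
  have h11 : ((Omega N*Γ)*(Omega N*Γ)).trace = ((Γ*Omega N)*(Γ*Omega N)).trace := by
    rw [show (Omega N*Γ)*(Omega N*Γ) = Omega N*(Γ*Omega N*Γ) by noncomm_ring,
      Matrix.trace_mul_comm,
      show (Γ*Omega N*Γ)*Omega N = (Γ*Omega N)*(Γ*Omega N) by noncomm_ring]
  have h12 : ((Γ*Omega N)*(Omega N*Γ)).trace = ((Omega N*Γ)*(Γ*Omega N)).trace :=
    Matrix.trace_mul_comm _ _
  have e2 : (C * C).trace = 2 * (X * Γ).trace := by
    rw [eX, expandC, expandX]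
    rw [Matrix.trace_sub, Matrix.trace_sub, Matrix.trace_sub, Matrix.trace_sub, h11, h12]
    ring
  have hCCzero : (C * C).trace = 0 := by
    have : (X * Γ).trace = 0 := by linarith [e1 ▸ hzero]
    rw [e2, this]; ring
  -- C*C has trace = sum of squares
  have hsymm : ∀ i j, C j i = C i j := by
    intro i j
    have := congrFun (congrFun hCt i) j
    simpa [Matrix.transpose_apply] using this
  have hsum : (C * C).trace = ∑ i, ∑ j, (C i j)^2 := by
    rw [Matrix.trace]
    simp only [Matrix.diag, Matrix.mul_apply]
    refine Finset.sum_congr rfl fun i _ => Finset.sum_congr rfl fun j _ => ?_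
    rw [hsymm j i]  -- C i j * C j i
    ring
  have hCzero : C = 0 := by
    ext i j
    have hsq : ∑ i, ∑ j, (C i j)^2 = 0 := by rw [← hsum]; exact hCCzero
    have h1 : ∀ i ∈ Finset.univ, (0:ℝ) ≤ ∑ j, (C i j)^2 :=
      fun i _ => Finset.sum_nonneg fun j _ => sq_nonneg _
    have h2 := (Finset.sum_eq_zero_iff_of_nonneg h1).mp hsq i (Finset.mem_univ i)
    have h3 := (Finset.sum_eq_zero_iff_of_nonneg
      (fun j _ => sq_nonneg (C i j))).mp h2 j (Finset.mem_univ j)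
    simpa using pow_eq_zero_iff (n := 2) (by norm_num) |>.mp h3
  have := sub_eq_zero.mp hCzero
  exact this


lemma decomp_of_commute {Γ : Matrix (Fin (2*N)) (Fin (2*N)) ℝ} (hΓ : Γ.PosDef)
    (hcomm : Γ * Omega N = Omega N * Γ) :
    ∃ (O : Matrix (Fin (2*N)) (Fin (2*N)) ℝ) (ν : Fin N → ℝ),
      O * Oᵀ = 1 ∧ O * Omega N * Oᵀ = Omega N ∧ (∀ k, 0 < ν k) ∧
      Γ = O * williamsonDiag N ν * Oᵀ := by
  classical
  have hΓsym : Γᵀ = Γ := by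
    have := hΓ.isHermitian
    rwa [Matrix.IsHermitian, Matrix.conjTranspose_eq_transpose_of_trivial] at this
  have hsym : ∀ i j, Γ j i = Γ i j := fun i j => by
    have := congrFun (congrFun hΓsym i) j
    simpa [Matrix.transpose_apply] using this
  -- block relations
  have hbl1 : ∀ k l : Fin N, Γ (od k) (ev l) = -(Γ (ev k) (od l)) := by
    intro k l
    have h := congrFun (congrFun hcomm (ev k)) (ev l)
    rw [mulo_ev, omul_ev] at h
    linarith [h]
  have hbl2 : ∀ k l : Fin N, Γ (od k) (od l) = Γ (ev k) (ev l) := by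
    intro k l
    have h := congrFun (congrFun hcomm (ev k)) (od l)
    rw [mulo_od, omul_ev] at h
    exact h.symm
  -- the complex matrix
  set A : Matrix (Fin N) (Fin N) ℂ :=
    Matrix.of fun k l => ⟨Γ (ev k) (ev l), Γ (ev k) (od l)⟩ with hAdef
  have hRfA : Rf A = Γ := by
    ext i j
    obtain ⟨k, rfl⟩ | ⟨k, rfl⟩ := ev_or_od i <;> obtain ⟨l, rfl⟩ | ⟨l, rfl⟩ := ev_or_od j
    · rw [Rf_ev_ev]; rfl
    · rw [Rf_ev_od]; rfl
    · rw [Rf_od_ev, hbl1 k l]; rfl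
    · rw [Rf_od_od, hbl2 k l]; rfl
  have hRf_inj : ∀ {A B : Matrix (Fin N) (Fin N) ℂ}, Rf A = Rf B → A = B := by
    intro A B h
    ext k l
    have h1 := congrFun (congrFun h (ev k)) (ev l)
    have h2 := congrFun (congrFun h (ev k)) (od l)
    rw [Rf_ev_ev, Rf_ev_ev] at h1
    rw [Rf_ev_od, Rf_ev_od] at h2
    exact Complex.ext h1 h2
  have hA : A.IsHermitian := by
    apply hRf_inj
    rw [Rf_conjTranspose, hRfA, hΓsym]
  -- spectral theorem
  set U : Matrix (Fin N) (Fin N) ℂ := (Matrix.IsHermitian.eigenvectorUnitary hA : Matrix (Fin N) (Fin N) ℂ) with hUdef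
  set ν : Fin N → ℝ := hA.eigenvalues with hνdef
  have hspec : A = U * Matrix.diagonal (fun k => (ν k : ℂ)) * Uᴴ := by
    have h := hA.spectral_theorem
    rw [← Matrix.star_eq_conjTranspose]
    exact h
  have hUU : U * Uᴴ = 1 := by
    rw [← Matrix.star_eq_conjTranspose]
    exact Matrix.mem_unitaryGroup_iff.mp (Matrix.IsHermitian.eigenvectorUnitary hA).2
  set O : Matrix (Fin (2*N)) (Fin (2*N)) ℝ := Rf U with hOdef
  have hOOt : O * Oᵀ = 1 := by
    rw [hOdef, ← Rf_conjTranspose, ← Rf_mul, hUU, Rf_one]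
  have hOsymp : O * Omega N * Oᵀ = Omega N := by
    rw [hOdef, ← Rf_conjTranspose, Omega_eq_Rf, ← Rf_mul, ← Rf_mul]
    refine congrArg Rf ?_
    calc U * (Complex.I • 1) * Uᴴ = Complex.I • (U * 1) * Uᴴ := by rw [mul_smul_comm]
      _ = Complex.I • (U * Uᴴ) := by rw [mul_one, Matrix.smul_mul]
      _ = Complex.I • 1 := by rw [hUU]
  have hGam : Γ = O * williamsonDiag N ν * Oᵀ := by
    rw [← hRfA, hOdef, ← Rf_conjTranspose, ← Rf_diagonal, ← Rf_mul, ← Rf_mul]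
    exact congrArg Rf hspec
  -- positivity of the symplectic eigenvalues
  have hOtO : Oᵀ * O = 1 := mul_eq_one_comm.mp hOOt
  have hW : williamsonDiag N ν = Oᵀ * Γ * O := by
    rw [hGam]
    calc williamsonDiag N ν
        = 1 * williamsonDiag N ν * 1 := by rw [one_mul, mul_one]
      _ = (Oᵀ * O) * williamsonDiag N ν * (Oᵀ * O) := by rw [hOtO]
      _ = Oᵀ * (O * williamsonDiag N ν * Oᵀ) * O := by simp only [mul_assoc]
  have hν : ∀ k, 0 < ν k := by
    intro k
    set x : Fin (2*N) → ℝ := fun i => O i (ev k) with hxdef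
    have hxne : x ≠ 0 := by
      intro h0
      have h1 : (Oᵀ * O) (ev k) (ev k) = 0 := by
        rw [Matrix.mul_apply]
        apply Finset.sum_eq_zero
        intro i _
        have hxi : O i (ev k) = 0 := congrFun h0 i
        rw [Matrix.transpose_apply, hxi, zero_mul]
      rw [hOtO] at h1
      simp [Matrix.one_apply] at h1
    have hpos := hΓ.dotProduct_mulVec_pos hxne
    rw [star_trivial] at hpos
    have hval : ν k = dotProduct x (Γ *ᵥ x) := by
      calc ν k = (Oᵀ * Γ * O) (ev k) (ev k) := by rw [← hW, wd_ev_ev, if_pos rfl]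
        _ = ∑ j, (∑ i, x i * Γ i j) * x j := by
            rw [Matrix.mul_apply]
            refine Finset.sum_congr rfl fun j _ => rfl
        _ = ∑ j, ∑ i, x i * Γ i j * x j := by
            refine Finset.sum_congr rfl fun j _ => ?_
            rw [Finset.sum_mul]
        _ = ∑ i, ∑ j, x i * Γ i j * x j := Finset.sum_comm
        _ = dotProduct x (Γ *ᵥ x) := by
            rw [dotProduct]
            refine Finset.sum_congr rfl fun i _ => ?_
            simp only [Matrix.mulVec, dotProduct, Finset.mul_sum]
            refine Finset.sum_congr rfl fun j _ => ?_
            ring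
    rw [hval]
    exact hpos
  exact ⟨O, ν, hOOt, hOsymp, hν, hGam⟩

end Will

open Will

/-- `W(Γ) = 0` if and only if `Γ = O D Oᵀ` for some orthogonal
symplectic `O` and `D = ⊕_k ν_k I₂` with `ν_k > 0`. -/
theorem extractableWork_eq_zero_iff_free
    (N : ℕ) (Γ : Matrix (Fin (2*N)) (Fin (2*N)) ℝ) (hΓ : Γ.PosDef) :
    extractableWork (Omega N) Γ = 0 ↔
      ∃ (O : Matrix (Fin (2*N)) (Fin (2*N)) ℝ) (ν : Fin N → ℝ),
        O * Oᵀ = 1 ∧ O * Omega N * Oᵀ = Omega N ∧ (∀ k, 0 < ν k) ∧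
        Γ = O * williamsonDiag N ν * Oᵀ := by
  constructor
  · intro h0
    have hmin := (W_zero_iff hΓ).mp h0
    have hΓsym : Γᵀ = Γ := by
      have := hΓ.isHermitian
      rwa [Matrix.IsHermitian, Matrix.conjTranspose_eq_transpose_of_trivial] at this
    exact decomp_of_commute hΓ (commutes_of_min hΓsym hmin)
  · rintro ⟨O, ν, hOOt, hOsym, hν, rfl⟩
    apply (W_zero_iff hΓ).mpr
    intro S hS
    have hOtO := mul_eq_one_comm.mp hOOt
    have htr : (O * williamsonDiag N ν * Oᵀ).trace = (williamsonDiag N ν).trace := by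
      rw [Matrix.trace_mul_cycle, hOtO, one_mul]
    have hSO : (S * O) * Omega N * (S * O)ᵀ = Omega N := by
      rw [Matrix.transpose_mul]
      calc S * O * Omega N * (Oᵀ * Sᵀ) = S * (O * Omega N * Oᵀ) * Sᵀ := by
            simp only [mul_assoc]
        _ = Omega N := by rw [hOsym, hS]
    have hassoc : S * (O * williamsonDiag N ν * Oᵀ) * Sᵀ
        = (S * O) * williamsonDiag N ν * (S * O)ᵀ := by
      rw [Matrix.transpose_mul]
      simp only [mul_assoc]
    rw [hassoc, htr]
    exact trace_conj_wd_ge ν (fun k => (hν k).le) hSO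
end
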